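/- arXiv:1708.04708 — 6 statements merged into one kernel-verified Lean document; each statement's English description precedes it below -/
import Mathlib

section
/- Let p : X̃ → X and q : Ỹ → Y be universal covering maps, let f : X → Y be a continuous map, and let f̃₀ : X̃ → Ỹ be a fixed lifting of f (i.e. q ∘ f̃₀ = f ∘ p). Then for any lifting f̃ : X̃ → Ỹ of f (i.e. q ∘ f̃ = f ∘ p) there exists a unique deck transformation h of q such that f̃ = h ∘ f̃₀. -/
open unitInterval

/-- A deck transformation of `q : E → B` is a self-homeomorphism `h` of `E` with `q ∘ h = q`. -/
def IsDeck {E B : Type*} [TopologicalSpace E] [TopologicalSpace B]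
    (q : E → B) (h : E ≃ₜ E) : Prop :=
  ∀ e, q (h e) = q e

/-- `ft` is a lifting of `f : X → Y` with respect to the covering maps `p, q`. -/
def IsLift {XT X YT Y : Type*} [TopologicalSpace XT] [TopologicalSpace X]
    [TopologicalSpace YT] [TopologicalSpace Y]
    (p : XT → X) (q : YT → Y) (f : X → Y) (ft : XT → YT) : Prop :=
  Continuous ft ∧ ∀ x, q (ft x) = f (p x)

/-- A homotopy `H : XT × I → YT` is fibre-preserving with respect to `p` and `q`, i.e.
fibre-preserving as a map with respect to `p × id : XT × I → X × I` and `q`. -/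
def IsFPHomotopy {XT X YT Y : Type*} [TopologicalSpace XT] [TopologicalSpace X]
    [TopologicalSpace YT] [TopologicalSpace Y]
    (p : XT → X) (q : YT → Y) (H : XT × I → YT) : Prop :=
  ∀ z z' : XT × I, p z.1 = p z'.1 → z.2 = z'.2 → q (H z) = q (H z')

/-!
Since `Ỹ` is simply connected and locally path-connected, the lifting criterion lifts `q` itself
through `q`, sending any point to any other point of its fibre; two such lifts in opposite
directions compose to lifts of `q` fixing a point, hence to the identity, so they form a deck
transformation. Two lifts of `f` (or two deck transformations) agreeing at one point agree
everywhere, so the deck transformation taking `f̃₀ x₀` to `f̃ x₀` is the one sought, and the only one.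
-/

namespace IsCoveringMap

variable {E B : Type*} [TopologicalSpace E] [TopologicalSpace B] {q : E → B}

theorem exists_continuousMap_lift_self [SimplyConnectedSpace E] [LocallyPathConnectedSpace E]
    (hq : IsCoveringMap q) {e₀ e₁ : E} (he : q e₀ = q e₁) :
    ∃ g : C(E, E), g e₀ = e₁ ∧ q ∘ g = q :=
  (hq.existsUnique_continuousMap_lifts ⟨q, hq.continuous⟩ e₀ e₁ he.symm).exists

theorem exists_isDeck_apply_eq [SimplyConnectedSpace E] [LocallyPathConnectedSpace E]
    (hq : IsCoveringMap q) {e₀ e₁ : E} (he : q e₀ = q e₁) :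
    ∃ h : E ≃ₜ E, IsDeck q h ∧ h e₀ = e₁ := by
  obtain ⟨g, hg₀, hgq⟩ := hq.exists_continuousMap_lift_self he
  obtain ⟨g', hg'₁, hg'q⟩ := hq.exists_continuousMap_lift_self he.symm
  have hg'g : g' ∘ g = id := hq.eq_of_comp_eq (by fun_prop) continuous_id
    (by rw [← Function.comp_assoc, hg'q, hgq, Function.comp_id]) e₀ (by simp [hg₀, hg'₁])
  have hgg' : g ∘ g' = id := hq.eq_of_comp_eq (by fun_prop) continuous_id
    (by rw [← Function.comp_assoc, hgq, hg'q, Function.comp_id]) e₁ (by simp [hg₀, hg'₁])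
  exact ⟨⟨⟨g, g', congrFun hg'g, congrFun hgg'⟩, g.continuous, g'.continuous⟩,
    congrFun hgq, hg₀⟩

theorem homeomorph_eq_of_isDeck [PreconnectedSpace E] (hq : IsCoveringMap q) {h h' : E ≃ₜ E}
    (hh : IsDeck q h) (hh' : IsDeck q h') {e : E} (he : h e = h' e) : h = h' :=
  Homeomorph.ext <| congrFun <| hq.eq_of_comp_eq h.continuous h'.continuous
    (funext fun y => (hh y).trans (hh' y).symm) e he

end IsCoveringMap

theorem stmt_0_general {X Y XT YT : Type*} [TopologicalSpace X] [TopologicalSpace Y]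
    [TopologicalSpace XT] [TopologicalSpace YT]
    [SimplyConnectedSpace XT] [SimplyConnectedSpace YT]
    [LocallyPathConnectedSpace YT]
    (p : XT → X) (q : YT → Y) (hq : IsCoveringMap q)
    (f : X → Y)
    (f0 : XT → YT) (hf0 : IsLift p q f f0)
    (ft : XT → YT) (hft : IsLift p q f ft) :
    ∃! h : YT ≃ₜ YT, IsDeck q h ∧ ft = ⇑h ∘ f0 := by
  obtain ⟨x₀⟩ : Nonempty XT := PathConnectedSpace.nonempty
  obtain ⟨h, hdeck, hx₀⟩ := hq.exists_isDeck_apply_eq (e₀ := f0 x₀) (e₁ := ft x₀)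
    (by rw [hf0.2, hft.2])
  have hft_eq : ft = h ∘ f0 := hq.eq_of_comp_eq hft.1 (h.continuous.comp hf0.1)
    (funext fun x => by simp [hdeck _, hf0.2, hft.2]) x₀ hx₀.symm
  exact ⟨h, ⟨hdeck, hft_eq⟩, fun h' ⟨hdeck', hft_eq'⟩ =>
    hq.homeomorph_eq_of_isDeck hdeck' hdeck (congrFun (hft_eq'.symm.trans hft_eq) x₀)⟩

/-- Every lifting of `f` differs from a fixed lifting `f0` by a unique deck transformation. -/
theorem stmt_0 {X Y XT YT : Type*} [TopologicalSpace X] [TopologicalSpace Y]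
    [TopologicalSpace XT] [TopologicalSpace YT]
    [PathConnectedSpace X] [PathConnectedSpace Y]
    [LocallyPathConnectedSpace X] [LocallyPathConnectedSpace Y]
    [SimplyConnectedSpace XT] [SimplyConnectedSpace YT]
    [LocallyPathConnectedSpace XT] [LocallyPathConnectedSpace YT]
    (p : XT → X) (q : YT → Y) (hp : IsCoveringMap p) (hq : IsCoveringMap q)
    (f : X → Y) (hf : Continuous f)
    (f0 : XT → YT) (hf0 : IsLift p q f f0)
    (ft : XT → YT) (hft : IsLift p q f ft) :
    ∃! h : YT ≃ₜ YT, IsDeck q h ∧ ft = ⇑h ∘ f0 :=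
  stmt_0_general p q hq f f0 hf0 ft hft
end

section
/- Let p : X̃ → X and q : Ỹ → Y be universal covering maps, f : X → Y a continuous map, and f̃₀ a fixed lifting of f. Then the map sending a deck transformation h of q to the composite h ∘ f̃₀ is a bijection from the group of deck transformations of q onto the set of all liftings of f. -/
/-! Liftings of `f` to simply connected covers are determined by the image of a single point.
So `h ↦ h ∘ f₀` is injective, as deck transformations agreeing at one point coincide; and a
lifting `f̃` is hit by the deck transformation carrying `f₀ x₀` to `f̃ x₀`, which exists because
`q` itself lifts through `q` with any prescribed value over a point of `Y`. -/

open unitInterval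

section Deck

variable {E B : Type*} [TopologicalSpace E] [TopologicalSpace B] {q : E → B}

theorem IsDeck.ext_of_apply_eq [PreconnectedSpace E] (hq : IsCoveringMap q)
    {h₁ h₂ : E ≃ₜ E} (hd₁ : IsDeck q h₁) (hd₂ : IsDeck q h₂) {e : E} (he : h₁ e = h₂ e) :
    h₁ = h₂ :=
  Homeomorph.ext <| congrFun <| hq.eq_of_comp_eq h₁.continuous h₂.continuous
    (funext fun y => (hd₁ y).trans (hd₂ y).symm) e he

theorem IsCoveringMap.exists_isDeck_apply_eq_s1 [SimplyConnectedSpace E]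
    [LocallyPathConnectedSpace E] (hq : IsCoveringMap q) {e₁ e₂ : E} (he : q e₁ = q e₂) :
    ∃ h : E ≃ₜ E, IsDeck q h ∧ h e₁ = e₂ := by
  obtain ⟨F, ⟨hF, hqF⟩, -⟩ :=
    hq.existsUnique_continuousMap_lifts ⟨q, hq.continuous⟩ e₁ e₂ he.symm
  obtain ⟨G, ⟨hG, hqG⟩, -⟩ :=
    hq.existsUnique_continuousMap_lifts ⟨q, hq.continuous⟩ e₂ e₁ he
  have hqGF : q ∘ (G ∘ F) = q ∘ id := funext fun e => (congrFun hqG (F e)).trans (congrFun hqF e)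
  have hqFG : q ∘ (F ∘ G) = q ∘ id := funext fun e => (congrFun hqF (G e)).trans (congrFun hqG e)
  have hGF : G ∘ F = id := hq.eq_of_comp_eq (by fun_prop) continuous_id hqGF e₁ (by simp [hF, hG])
  have hFG : F ∘ G = id := hq.eq_of_comp_eq (by fun_prop) continuous_id hqFG e₂ (by simp [hF, hG])
  refine ⟨⟨⟨F, G, congrFun hGF, congrFun hFG⟩, F.continuous, G.continuous⟩, ?_, hF⟩
  exact fun e => congrFun hqF e

end Deck

section Lift

variable {XT X YT Y : Type*} [TopologicalSpace XT] [TopologicalSpace X]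
  [TopologicalSpace YT] [TopologicalSpace Y] {p : XT → X} {q : YT → Y} {f : X → Y}
  {f₁ f₂ : XT → YT}

theorem IsLift.eq_of_apply_eq [PreconnectedSpace XT] (hq : IsCoveringMap q)
    (hf₁ : IsLift p q f f₁) (hf₂ : IsLift p q f f₂) {x : XT} (hx : f₁ x = f₂ x) : f₁ = f₂ :=
  hq.eq_of_comp_eq hf₁.1 hf₂.1 (funext fun x => (hf₁.2 x).trans (hf₂.2 x).symm) x hx

theorem IsLift.isDeck_comp (hf₁ : IsLift p q f f₁) {h : YT ≃ₜ YT} (hh : IsDeck q h) :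
    IsLift p q f (h ∘ f₁) :=
  ⟨h.continuous.comp hf₁.1, fun x => (hh (f₁ x)).trans (hf₁.2 x)⟩

end Lift

theorem stmt_1_general {X Y XT YT : Type*} [TopologicalSpace X] [TopologicalSpace Y]
    [TopologicalSpace XT] [TopologicalSpace YT]
    [SimplyConnectedSpace XT] [SimplyConnectedSpace YT]
    [LocallyPathConnectedSpace YT]
    (p : XT → X) (q : YT → Y) (hq : IsCoveringMap q)
    (f : X → Y)
    (f0 : XT → YT) (hf0 : IsLift p q f f0) :
    Function.Injective (fun h : {h : YT ≃ₜ YT // IsDeck q h} => (⇑h.1 ∘ f0 : XT → YT)) ∧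
      Set.range (fun h : {h : YT ≃ₜ YT // IsDeck q h} => (⇑h.1 ∘ f0 : XT → YT)) =
        {ft : XT → YT | IsLift p q f ft} := by
  obtain ⟨x₀⟩ : Nonempty XT := inferInstance
  refine ⟨fun h₁ h₂ heq => Subtype.ext <| IsDeck.ext_of_apply_eq hq h₁.2 h₂.2 (congrFun heq x₀), ?_⟩
  ext ft
  constructor
  · rintro ⟨h, rfl⟩
    exact hf0.isDeck_comp h.2
  · intro hft
    obtain ⟨h, hh, hx₀⟩ :=
      hq.exists_isDeck_apply_eq_s1 ((hf0.2 x₀).trans (hft.2 x₀).symm)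
    exact ⟨⟨h, hh⟩, (hf0.isDeck_comp hh).eq_of_apply_eq hq hft hx₀⟩

/-- The map `h ↦ h ∘ f0` is a bijection from the group of deck transformations of `q`
onto the set of all liftings of `f`. -/
theorem stmt_1 {X Y XT YT : Type*} [TopologicalSpace X] [TopologicalSpace Y]
    [TopologicalSpace XT] [TopologicalSpace YT]
    [PathConnectedSpace X] [PathConnectedSpace Y]
    [LocallyPathConnectedSpace X] [LocallyPathConnectedSpace Y]
    [SimplyConnectedSpace XT] [SimplyConnectedSpace YT]
    [LocallyPathConnectedSpace XT] [LocallyPathConnectedSpace YT]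
    (p : XT → X) (q : YT → Y) (hp : IsCoveringMap p) (hq : IsCoveringMap q)
    (f : X → Y) (hf : Continuous f)
    (f0 : XT → YT) (hf0 : IsLift p q f f0) :
    Function.Injective (fun h : {h : YT ≃ₜ YT // IsDeck q h} => (⇑h.1 ∘ f0 : XT → YT)) ∧
      Set.range (fun h : {h : YT ≃ₜ YT // IsDeck q h} => (⇑h.1 ∘ f0 : XT → YT)) =
        {ft : XT → YT | IsLift p q f ft} :=
  stmt_1_general p q hq f f0 hf0
end

section
/- Let p : X̃ → X and q : Ỹ → Y be universal covering maps, f : X → Y continuous, f̃₀ a fixed lifting of f, and f_* : D(X) → D(Y) the induced homomorphism of deck transformation groups. If h is a deck transformation of q for which there exists a fibre-preserving homotopy H̃ : X̃ × [0,1] → Ỹ with H̃₀ = f̃₀ and H̃₁ = h ∘ f̃₀, then h commutes with f_*(l) for every deck transformation l of p; that is, h lies in the centralizer of f_*(D(X)) in D(Y). -/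
/-!
Both `h ∘ f_*(l)` and `f_*(l) ∘ h` are deck transformations of `q`, so it suffices that they agree
at one point `f₀ x₀`. Since `H̃` is fibre-preserving, the paths `t ↦ H̃(l x₀, t)` and
`t ↦ f_*(l) (H̃(x₀, t))` lie over the same path in `Y` and both start at `f₀(l x₀)`; by uniqueness
of path lifting they agree at `t = 1`, which is `h (f₀ (l x₀)) = f_*(l) (h (f₀ x₀))`.
-/

open unitInterval

section Deck

variable {E B : Type*} [TopologicalSpace E] [TopologicalSpace B] {q : E → B} {h k : E ≃ₜ E}

theorem IsDeck.trans (hh : IsDeck q h) (hk : IsDeck q k) : IsDeck q (h.trans k) :=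
  fun e => (hk (h e)).trans (hh e)

theorem IsDeck.eq_of_apply_eq [PreconnectedSpace E] (hq : IsCoveringMap q) (hh : IsDeck q h)
    (hk : IsDeck q k) {e : E} (he : h e = k e) : h = k :=
  Homeomorph.ext <| congrFun <|
    hq.eq_of_comp_eq h.continuous k.continuous (funext fun x => (hh x).trans (hk x).symm) e he

end Deck

theorem IsFPHomotopy.apply_deck_of_apply_zero {XT X YT Y : Type*} [TopologicalSpace XT]
    [TopologicalSpace X] [TopologicalSpace YT] [TopologicalSpace Y]
    {p : XT → X} {q : YT → Y} {H : C(XT × I, YT)} (hH : IsFPHomotopy p q H)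
    (hq : IsCoveringMap q) {l : XT ≃ₜ XT} {k : YT ≃ₜ YT} (hl : IsDeck p l) (hk : IsDeck q k)
    {x : XT} (h₀ : H (l x, 0) = k (H (x, 0))) (t : I) : H (l x, t) = k (H (x, t)) := by
  have hsame_base : q ∘ (fun t => H (l x, t)) = q ∘ (fun t => k (H (x, t))) :=
    funext fun t => (hH (l x, t) (x, t) (hl x) rfl).trans (hk _).symm
  exact congrFun (hq.eq_of_comp_eq (by fun_prop) (by fun_prop) hsame_base 0 h₀) t

theorem stmt_4_general {X Y XT YT : Type*} [TopologicalSpace X] [TopologicalSpace Y]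
    [TopologicalSpace XT] [TopologicalSpace YT]
    [SimplyConnectedSpace XT] [SimplyConnectedSpace YT]
    (p : XT → X) (q : YT → Y) (hq : IsCoveringMap q)
    (f0 : XT → YT)
    -- the induced homomorphism `f_*` on deck transformation groups:
    (fstar : (XT ≃ₜ XT) → (YT ≃ₜ YT))
    (hfstar : ∀ l : XT ≃ₜ XT, IsDeck p l →
      IsDeck q (fstar l) ∧ ∀ x, f0 (l x) = fstar l (f0 x))
    (h : YT ≃ₜ YT) (hh : IsDeck q h)
    (HT : C(XT × I, YT)) (hfib : IsFPHomotopy p q HT)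
    (hHT0 : ∀ x, HT (x, 0) = f0 x) (hHT1 : ∀ x, HT (x, 1) = h (f0 x)) :
    ∀ l : XT ≃ₜ XT, IsDeck p l → ∀ y, h (fstar l y) = fstar l (h y) := by
  intro l hl
  obtain ⟨hdeck, hcomm⟩ := hfstar l hl
  obtain ⟨x₀⟩ : Nonempty XT := inferInstance
  have hcomm_at : h (fstar l (f0 x₀)) = fstar l (h (f0 x₀)) := by
    simpa only [hHT1, hcomm] using
      hfib.apply_deck_of_apply_zero hq hl hdeck (by simp only [hHT0, hcomm]) 1
  exact DFunLike.congr_fun ((hdeck.trans hh).eq_of_apply_eq hq (hh.trans hdeck) hcomm_at)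

/-- If `h` is a deck transformation of `q` admitting a fibre-preserving homotopy from `f0`
to `h ∘ f0`, then `h` lies in the centralizer of `f_*(D(X))` in `D(Y)`. -/
theorem stmt_4 {X Y XT YT : Type*} [TopologicalSpace X] [TopologicalSpace Y]
    [TopologicalSpace XT] [TopologicalSpace YT]
    [PathConnectedSpace X] [PathConnectedSpace Y]
    [LocallyPathConnectedSpace X] [LocallyPathConnectedSpace Y]
    [SimplyConnectedSpace XT] [SimplyConnectedSpace YT]
    [LocallyPathConnectedSpace XT] [LocallyPathConnectedSpace YT]
    (p : XT → X) (q : YT → Y) (hp : IsCoveringMap p) (hq : IsCoveringMap q)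
    (f : X → Y) (hf : Continuous f)
    (f0 : XT → YT) (hf0 : IsLift p q f f0)
    -- the induced homomorphism `f_*` on deck transformation groups:
    (fstar : (XT ≃ₜ XT) → (YT ≃ₜ YT))
    (hfstar : ∀ l : XT ≃ₜ XT, IsDeck p l →
      IsDeck q (fstar l) ∧ ∀ x, f0 (l x) = fstar l (f0 x))
    (h : YT ≃ₜ YT) (hh : IsDeck q h)
    (HT : C(XT × I, YT)) (hfib : IsFPHomotopy p q HT)
    (hHT0 : ∀ x, HT (x, 0) = f0 x) (hHT1 : ∀ x, HT (x, 1) = h (f0 x)) :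
    ∀ l : XT ≃ₜ XT, IsDeck p l → ∀ y, h (fstar l y) = fstar l (h y) :=
  stmt_4_general p q hq f0 fstar hfstar h hh HT hfib hHT0 hHT1
end

section
/- Let p : X̃ → X and q : Ỹ → Y be universal covering maps, f : X → Y continuous, x₀ ∈ X a base-point, x̃₀ ∈ p⁻¹(x₀), and f̃₀ a fixed lifting of f. Suppose a : [0,1] → Y is a loop at f(x₀) for which there exists a homotopy H : X × [0,1] → Y with H(·,0) = H(·,1) = f and H(x₀, t) = a(t) for all t. Let ã : [0,1] → Ỹ be the lift of a with ã(0) = f̃₀(x̃₀), and let h be the unique deck transformation of q with h(f̃₀(x̃₀)) = ã(1). Then there exists a fibre-preserving homotopy H̃ : X̃ × [0,1] → Ỹ with H̃₀ = f̃₀, H̃₁ = h ∘ f̃₀, and q ∘ H̃ = H ∘ (p × id). In particular h ∈ D^{f̃₀}(Y). -/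
open unitInterval

/-!
Lift `H ∘ (p × id)` to a homotopy starting at `f̃₀`. Its track through `x̃₀` is the lift `ã` of
`a`, so its final stage and `h ∘ f̃₀` are lifts of `f ∘ p` that agree at `x̃₀`; as `X̃` is
connected, they coincide.
-/

section HomotopyLifting

variable {E B A : Type*} [TopologicalSpace E] [TopologicalSpace B] [TopologicalSpace A]
  {q : E → B}

theorem IsCoveringMap.exists_lift_homotopy (hq : IsCoveringMap q) (F : C(A × I, B))
    (g : C(A, E)) (hg : ∀ a, q (g a) = F (a, 0)) :
    ∃ G : C(A × I, E), q ∘ G = F ∧ ∀ a, G (a, 0) = g a := by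
  have hg' (a : A) : F.comp .prodSwap (0, a) = q (g a) := (hg a).symm
  exact ⟨(hq.liftHomotopy _ g hg').comp .prodSwap,
    funext fun z => congrFun (hq.liftHomotopy_lifts _ g hg') z.swap,
    hq.liftHomotopy_zero _ g hg'⟩

theorem IsCoveringMap.lift_homotopy_apply_one_eq [PreconnectedSpace A] (hq : IsCoveringMap q)
    {F : C(A × I, B)} {G : C(A × I, E)} (hG : q ∘ G = F) {g₁ : A → E} (hg₁ : Continuous g₁)
    (hFg₁ : ∀ a, F (a, 1) = q (g₁ a)) (a₀ : A) (γ : C(I, E))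
    (hγ : ∀ t, q (γ t) = F (a₀, t)) (hγ0 : γ 0 = G (a₀, 0)) (hγ1 : γ 1 = g₁ a₀) (a : A) :
    G (a, 1) = g₁ a := by
  have htrack : (fun t => G (a₀, t)) = γ :=
    hq.eq_of_comp_eq (G.continuous.comp (.prodMk_right a₀)) γ.continuous
      (funext fun t => (congrFun hG (a₀, t)).trans (hγ t).symm) 0 hγ0.symm
  have hend : (fun a => G (a, 1)) = g₁ :=
    hq.eq_of_comp_eq (G.continuous.comp (.prodMk_left 1)) hg₁
      (funext fun a => (congrFun hG (a, 1)).trans (hFg₁ a)) a₀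
      ((congrFun htrack 1).trans hγ1)
  exact congrFun hend a

end HomotopyLifting

theorem stmt_6_general {X Y XT YT : Type*} [TopologicalSpace X] [TopologicalSpace Y]
    [TopologicalSpace XT] [TopologicalSpace YT]
    [SimplyConnectedSpace XT]
    (p : XT → X) (q : YT → Y) (hp : IsCoveringMap p) (hq : IsCoveringMap q)
    (f : X → Y)
    (x₀ : X) (xt₀ : XT) (hxt₀ : p xt₀ = x₀)
    (f0 : XT → YT) (hf0 : IsLift p q f f0)
    (a : C(I, Y))
    (H : C(X × I, Y)) (hH0 : ∀ x, H (x, 0) = f x) (hH1 : ∀ x, H (x, 1) = f x)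
    (hHa : ∀ t, H (x₀, t) = a t)
    (at' : C(I, YT)) (hat : ∀ t, q (at' t) = a t) (hat0 : at' 0 = f0 xt₀)
    (h : YT ≃ₜ YT) (hh : IsDeck q h) (hh1 : h (f0 xt₀) = at' 1) :
    ∃ HT : C(XT × I, YT), IsFPHomotopy p q HT ∧
      (∀ x, HT (x, 0) = f0 x) ∧ (∀ x, HT (x, 1) = h (f0 x)) ∧
      (∀ (x : XT) (t : I), q (HT (x, t)) = H (p x, t)) := by
  obtain ⟨HT, hlift, hinit⟩ := hq.exists_lift_homotopy
    (H.comp ((ContinuousMap.mk p hp.continuous).prodMap (.id I))) ⟨f0, hf0.1⟩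
    fun x => by simp [hf0.2, hH0]
  have hcover (x : XT) (t : I) : q (HT (x, t)) = H (p x, t) := congrFun hlift (x, t)
  have hend : ∀ x, HT (x, 1) = h (f0 x) :=
    hq.lift_homotopy_apply_one_eq hlift (h.continuous.comp hf0.1)
      (fun x => by simp [hh (f0 x), hf0.2, hH1]) xt₀ at'
      (fun t => by simp [hat, hxt₀, hHa]) (hat0.trans (hinit xt₀).symm) hh1.symm
  refine ⟨HT, ?_, hinit, hend, hcover⟩
  rintro ⟨x, t⟩ ⟨x', t'⟩ (hx : p x = p x') (rfl : t = t')
  rw [hcover, hcover, hx]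

/-- If a loop `a` at `f x₀` extends to a homotopy `H` from `f` to `f` (i.e. represents an
element of the generalized Gottlieb group), and `h` is the deck transformation of `q` sending
`f0 x̃₀` to the endpoint of the lift `ã` of `a` starting at `f0 x̃₀`, then there is a
fibre-preserving homotopy `HT` with `HT_0 = f0`, `HT_1 = h ∘ f0` and `q ∘ HT = H ∘ (p × id)`;
in particular `h ∈ D^{f0}(Y)`. -/
theorem stmt_6 {X Y XT YT : Type*} [TopologicalSpace X] [TopologicalSpace Y]
    [TopologicalSpace XT] [TopologicalSpace YT]
    [PathConnectedSpace X] [PathConnectedSpace Y]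
    [LocallyPathConnectedSpace X] [LocallyPathConnectedSpace Y]
    [SimplyConnectedSpace XT] [SimplyConnectedSpace YT]
    [LocallyPathConnectedSpace XT] [LocallyPathConnectedSpace YT]
    (p : XT → X) (q : YT → Y) (hp : IsCoveringMap p) (hq : IsCoveringMap q)
    (f : X → Y) (hf : Continuous f)
    (x₀ : X) (xt₀ : XT) (hxt₀ : p xt₀ = x₀)
    (f0 : XT → YT) (hf0 : IsLift p q f f0)
    (a : C(I, Y)) (ha0 : a 0 = f x₀) (ha1 : a 1 = f x₀)
    (H : C(X × I, Y)) (hH0 : ∀ x, H (x, 0) = f x) (hH1 : ∀ x, H (x, 1) = f x)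
    (hHa : ∀ t, H (x₀, t) = a t)
    (at' : C(I, YT)) (hat : ∀ t, q (at' t) = a t) (hat0 : at' 0 = f0 xt₀)
    (h : YT ≃ₜ YT) (hh : IsDeck q h) (hh1 : h (f0 xt₀) = at' 1) :
    ∃ HT : C(XT × I, YT), IsFPHomotopy p q HT ∧
      (∀ x, HT (x, 0) = f0 x) ∧ (∀ x, HT (x, 1) = h (f0 x)) ∧
      (∀ (x : XT) (t : I), q (HT (x, t)) = H (p x, t)) :=
  stmt_6_general p q hp hq f x₀ xt₀ hxt₀ f0 hf0 a H hH0 hH1 hHa at' hat hat0 h hh hh1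
end

section
/- Let p : X̃ → X and q : Ỹ → Y be universal covering maps, f : X → Y continuous, x₀ ∈ X a base-point, x̃₀ ∈ p⁻¹(x₀), and f̃₀ a fixed lifting of f. Suppose h is a deck transformation of q and H̃ : X̃ × [0,1] → Ỹ is a fibre-preserving homotopy with H̃₀ = f̃₀ and H̃₁ = h ∘ f̃₀. Then there exists a continuous map H : X × [0,1] → Y with q ∘ H̃ = H ∘ (p × id), this H satisfies H(·,0) = H(·,1) = f, and the loop a(t) = q(H̃(x̃₀, t)) is a loop at f(x₀) satisfying H(x₀, t) = a(t); moreover the lift of a starting at f̃₀(x̃₀) ends at h(f̃₀(x̃₀)). In particular, the homotopy class of a belongs to the generalized Gottlieb group G^f(Y, f(x₀)). -/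
/-!
The map `p × id : X̃ × I → X × I` is a quotient map, being an open surjection (a covering map
onto a connected space with nonempty total space is onto). A fibre-preserving homotopy
therefore descends along it to a homotopy `H` on `X × I`. Its ends are `f` because
`q ∘ f̃₀ = f ∘ p` and `q ∘ h = q`, and its trace at `x₀` is `q ∘ H̃(x̃₀, ·)`, which lifts to the
path `H̃(x̃₀, ·)` from `f̃₀ x̃₀` to `h (f̃₀ x̃₀)`.
-/

open unitInterval Topology

namespace IsCoveringMap

variable {E X : Type*} [TopologicalSpace E] [TopologicalSpace X] {f : E → X}

theorem isClosed_range (hf : IsCoveringMap f) : IsClosed (Set.range f) := by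
  refine isOpen_compl_iff.1 (isOpen_iff_forall_mem_open.2 fun x hx => ?_)
  obtain ⟨-, U, hxU, hU, -, H, -⟩ := hf x
  refine ⟨U, ?_, hU, hxU⟩
  rintro _ hy ⟨e, rfl⟩
  -- the trivialisation over `U` sends `e` to a point of the fibre over `x`
  exact hx ⟨_, (H ⟨e, hy⟩).2.2⟩

theorem surjective [PreconnectedSpace X] [Nonempty E] (hf : IsCoveringMap f) :
    Function.Surjective f :=
  Set.range_eq_univ.1 <|
    IsClopen.eq_univ ⟨hf.isClosed_range, hf.isOpenMap.isOpen_range⟩ (Set.range_nonempty f)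

theorem isQuotientMap_prodMap_id [PreconnectedSpace X] [Nonempty E] (hf : IsCoveringMap f)
    (T : Type*) [TopologicalSpace T] : IsQuotientMap (Prod.map f (id : T → T)) :=
  (hf.isOpenMap.prodMap IsOpenMap.id).isQuotientMap (hf.continuous.prodMap continuous_id)
    (hf.surjective.prodMap Function.surjective_id)

end IsCoveringMap

theorem IsFPHomotopy.exists_descent {XT X YT Y : Type*} [TopologicalSpace XT]
    [TopologicalSpace X] [TopologicalSpace YT] [TopologicalSpace Y] [PreconnectedSpace X]
    [Nonempty XT] {p : XT → X} {q : YT → Y} (hp : IsCoveringMap p) (hq : IsCoveringMap q)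
    {HT : C(XT × I, YT)} (hfib : IsFPHomotopy p q HT) :
    ∃ H : C(X × I, Y), ∀ (x : XT) (t : I), q (HT (x, t)) = H (p x, t) := by
  have hquot : IsQuotientMap ((⟨p, hp.continuous⟩ : C(XT, X)).prodMap (ContinuousMap.id I)) :=
    hp.isQuotientMap_prodMap_id I
  let qHT : C(XT × I, Y) := (⟨q, hq.continuous⟩ : C(YT, Y)).comp HT
  have hfactors : Function.FactorsThrough qHT (Prod.map p id) := fun ⦃z z'⦄ hz =>
    hfib z z' (Prod.ext_iff.1 hz).1 (Prod.ext_iff.1 hz).2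
  refine ⟨hquot.lift qHT hfactors, fun x t => ?_⟩
  exact (DFunLike.congr_fun (hquot.lift_comp _ hfactors) (x, t)).symm

theorem stmt_7_general {X Y XT YT : Type*} [TopologicalSpace X] [TopologicalSpace Y]
    [TopologicalSpace XT] [TopologicalSpace YT]
    [PathConnectedSpace X]
    (p : XT → X) (q : YT → Y) (hp : IsCoveringMap p) (hq : IsCoveringMap q)
    (f : X → Y)
    (x₀ : X) (xt₀ : XT) (hxt₀ : p xt₀ = x₀)
    (f0 : XT → YT) (hf0 : IsLift p q f f0)
    (h : YT ≃ₜ YT) (hh : IsDeck q h)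
    (HT : C(XT × I, YT)) (hfib : IsFPHomotopy p q HT)
    (hHT0 : ∀ x, HT (x, 0) = f0 x) (hHT1 : ∀ x, HT (x, 1) = h (f0 x)) :
    ∃ H : C(X × I, Y),
      (∀ (x : XT) (t : I), q (HT (x, t)) = H (p x, t)) ∧
      (∀ x, H (x, 0) = f x) ∧ (∀ x, H (x, 1) = f x) ∧
      (∀ t : I, H (x₀, t) = q (HT (xt₀, t))) ∧
      ∃ at' : C(I, YT), (∀ t, q (at' t) = q (HT (xt₀, t))) ∧
        at' 0 = f0 xt₀ ∧ at' 1 = h (f0 xt₀) := by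
  have : Nonempty XT := ⟨xt₀⟩
  obtain ⟨H, hH⟩ := hfib.exists_descent hp hq
  refine ⟨H, hH, fun x => ?_, fun x => ?_, fun t => ?_, ⟨fun t => HT (xt₀, t), by fun_prop⟩,
    fun t => rfl, hHT0 xt₀, hHT1 xt₀⟩
  · obtain ⟨xt, rfl⟩ := hp.surjective x
    rw [← hH, hHT0, hf0.2]
  · obtain ⟨xt, rfl⟩ := hp.surjective x
    rw [← hH, hHT1, hh, hf0.2]
  · rw [← hxt₀, ← hH]

/-- A fibre-preserving homotopy `HT` from `f0` to `h ∘ f0` descends to a homotopy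
`H : X × I → Y` from `f` to `f` whose trace at `x₀` is the loop `a(t) = q (HT (x̃₀, t))`;
moreover the lift of `a` starting at `f0 x̃₀` ends at `h (f0 x̃₀)`. In particular the class
of `a` lies in the generalized Gottlieb group `G^f(Y, f x₀)`. -/
theorem stmt_7 {X Y XT YT : Type*} [TopologicalSpace X] [TopologicalSpace Y]
    [TopologicalSpace XT] [TopologicalSpace YT]
    [PathConnectedSpace X] [PathConnectedSpace Y]
    [LocallyPathConnectedSpace X] [LocallyPathConnectedSpace Y]
    [SimplyConnectedSpace XT] [SimplyConnectedSpace YT]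
    [LocallyPathConnectedSpace XT] [LocallyPathConnectedSpace YT]
    (p : XT → X) (q : YT → Y) (hp : IsCoveringMap p) (hq : IsCoveringMap q)
    (f : X → Y) (hf : Continuous f)
    (x₀ : X) (xt₀ : XT) (hxt₀ : p xt₀ = x₀)
    (f0 : XT → YT) (hf0 : IsLift p q f f0)
    (h : YT ≃ₜ YT) (hh : IsDeck q h)
    (HT : C(XT × I, YT)) (hfib : IsFPHomotopy p q HT)
    (hHT0 : ∀ x, HT (x, 0) = f0 x) (hHT1 : ∀ x, HT (x, 1) = h (f0 x)) :
    ∃ H : C(X × I, Y),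
      (∀ (x : XT) (t : I), q (HT (x, t)) = H (p x, t)) ∧
      (∀ x, H (x, 0) = f x) ∧ (∀ x, H (x, 1) = f x) ∧
      (∀ t : I, H (x₀, t) = q (HT (xt₀, t))) ∧
      ∃ at' : C(I, YT), (∀ t, q (at' t) = q (HT (xt₀, t))) ∧
        at' 0 = f0 xt₀ ∧ at' 1 = h (f0 xt₀) :=
  stmt_7_general p q hp hq f x₀ xt₀ hxt₀ f0 hf0 h hh HT hfib hHT0 hHT1
end

section
/- Let p : X̃ → X and q : Ỹ → Y be universal covering maps, f : X → Y continuous, x₀ ∈ X, x̃₀ ∈ p⁻¹(x₀), and f̃₀ a fixed lifting of f. Let h be a deck transformation of q and H̃ : X̃ × [0,1] → Ỹ a homotopy with H̃₀ = f̃₀ and H̃₁ = h ∘ f̃₀, and set φ(t) = q(H̃(x̃₀, t)), a loop at f(x₀). Then for every m ≥ 2 and every continuous map α : S^m → X from the m-sphere with α(b) = x₀ at the base-point b ∈ S^m, there exists a continuous map F : S^m × [0,1] → Y such that F(s, 0) = F(s, 1) = f(α(s)) for all s ∈ S^m and F(b, t) = φ(t) for all t ∈ [0,1]. -/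
/-!
Lift `α` through `p` to `α̃ : S^m → X̃` with `α̃ b = x̃₀`; then `F (s, t) = q (H̃ (α̃ s, t))` works,
because `q ∘ H̃₀ = q ∘ f̃₀ = f ∘ p` and `q ∘ H̃₁ = q ∘ h ∘ f̃₀ = f ∘ p`.

To lift `α`, cover `S^m` by the open sets `S^m ∖ {-b}` and `S^m ∖ {b}`. Each is homeomorphic to
`ℝ^m` by stereographic projection, hence simply connected, so `α` lifts on each of them; their
intersection `S^m ∖ {b, -b} ≅ ℝ^m ∖ {pt}` is connected for `m ≥ 2`, so two such lifts that agree at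
one point of it agree on all of it and glue.
-/

open unitInterval

open Set Metric Module

theorem IsCoveringMap.exists_lift_of_isOpen_cover {A E X : Type*} [TopologicalSpace A]
    [TopologicalSpace E] [TopologicalSpace X] [LocallyPathConnectedSpace A]
    {p : E → X} (hp : IsCoveringMap p) (f : C(A, X)) {U V : Set A}
    (hU : IsOpen U) (hV : IsOpen V) (hUV : U ∪ V = univ)
    [SimplyConnectedSpace U] [SimplyConnectedSpace V] (hUV_conn : IsConnected (U ∩ V))
    {a₀ : A} (ha₀ : a₀ ∈ U) {e₀ : E} (he₀ : p e₀ = f a₀) :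
    ∃ F : C(A, E), F a₀ = e₀ ∧ p ∘ F = f := by
  have := hU.locallyPathConnectedSpace
  have := hV.locallyPathConnectedSpace
  obtain ⟨g₁, hg₁a₀, hg₁⟩ :=
    (hp.existsUnique_continuousMap_lifts (f.restrict U) ⟨a₀, ha₀⟩ e₀ he₀).exists
  obtain ⟨c, hcU, hcV⟩ := hUV_conn.nonempty
  obtain ⟨g₂, hg₂c, hg₂⟩ := (hp.existsUnique_continuousMap_lifts (f.restrict V) ⟨c, hcV⟩
    (g₁ ⟨c, hcU⟩) (congrFun hg₁ ⟨c, hcU⟩)).exists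
  have hagree : ∀ (a : A) (haU : a ∈ U) (haV : a ∈ V), g₁ ⟨a, haU⟩ = g₂ ⟨a, haV⟩ := by
    have := isPreconnected_iff_preconnectedSpace.mp hUV_conn.isPreconnected
    have h := hp.eq_of_comp_eq (A := ↥(U ∩ V))
      (g₁.continuous.comp (continuous_subtype_val.subtype_mk fun a => a.2.1))
      (g₂.continuous.comp (continuous_subtype_val.subtype_mk fun a => a.2.2))
      (by ext a; exact (congrFun hg₁ ⟨a, a.2.1⟩).trans (congrFun hg₂ ⟨a, a.2.2⟩).symm)
      ⟨c, hcU, hcV⟩ hg₂c.symm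
    exact fun a haU haV => congrFun h ⟨a, haU, haV⟩
  have hcover : ∀ a, a ∈ U ∨ a ∈ V := fun a => (hUV.symm ▸ mem_univ a : a ∈ U ∪ V)
  let S : Bool → Set A := fun i => bif i then U else V
  let φ : ∀ i, C(S i, E) := fun i => match i with
    | true => g₁
    | false => g₂
  refine ⟨ContinuousMap.liftCover S φ ?_ ?_, ?_, ?_⟩
  · rintro (_ | _) (_ | _) a ha hb
    exacts [rfl, (hagree a hb ha).symm, hagree a ha hb, rfl]
  · intro a
    rcases hcover a with ha | ha
    exacts [⟨true, hU.mem_nhds ha⟩, ⟨false, hV.mem_nhds ha⟩]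
  · exact (ContinuousMap.liftCover_coe (i := true) ⟨a₀, ha₀⟩).trans hg₁a₀
  · ext a
    rcases hcover a with ha | ha
    · exact (congrArg p (ContinuousMap.liftCover_coe (i := true) ⟨a, ha⟩)).trans
        (congrFun hg₁ ⟨a, ha⟩)
    · exact (congrArg p (ContinuousMap.liftCover_coe (i := false) ⟨a, ha⟩)).trans
        (congrFun hg₂ ⟨a, ha⟩)

section Sphere

variable {W : Type*} [NormedAddCommGroup W] [InnerProductSpace ℝ W]

theorem contractibleSpace_sphere_compl_singleton (n : ℕ) [Fact (finrank ℝ W = n + 1)]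
    (v : sphere (0 : W) 1) :
    ContractibleSpace ({v}ᶜ : Set (sphere (0 : W) 1)) :=
  have : ContractibleSpace (univ : Set (EuclideanSpace ℝ (Fin n))) :=
    convex_univ.contractibleSpace univ_nonempty
  ((Homeomorph.setCongr (stereographic'_source v)).symm.trans <|
    (stereographic' n v).toHomeomorphSourceTarget.trans <|
      Homeomorph.setCongr (stereographic'_target v)).contractibleSpace

theorem locallyPathConnectedSpace_sphere (n : ℕ) [Fact (finrank ℝ W = n + 1)] :
    LocallyPathConnectedSpace (sphere (0 : W) 1) :=
  ChartedSpace.locallyPathConnectedSpace (EuclideanSpace ℝ (Fin n)) _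

theorem isPathConnected_sphere_compl_pair {n : ℕ} [Fact (finrank ℝ W = n + 1)] (hn : 2 ≤ n)
    {v w : sphere (0 : W) 1} (hwv : w ≠ v) :
    IsPathConnected ({v}ᶜ ∩ {w}ᶜ : Set (sphere (0 : W) 1)) := by
  set Φ := stereographic' n v
  have hsource : Φ.source = {v}ᶜ := stereographic'_source v
  have htarget : Φ.target = univ := stereographic'_target v
  have hw : w ∈ Φ.source := hsource ▸ hwv
  have hrank : 1 < Module.rank ℝ (EuclideanSpace ℝ (Fin n)) := by
    rw [← finrank_eq_rank, finrank_euclideanSpace_fin]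
    exact_mod_cast hn
  have himage : Φ.symm '' {Φ w}ᶜ = {v}ᶜ ∩ {w}ᶜ := by
    rw [Φ.symm_image_eq_source_inter_preimage (htarget ▸ subset_univ _), ← hsource]
    ext s
    exact and_congr_right fun hs => Φ.injOn.ne_iff hs hw
  rw [← himage]
  exact (isPathConnected_compl_singleton_of_one_lt_rank hrank _).image'
    (Φ.continuousOn_symm.mono (htarget ▸ subset_univ _))

theorem IsCoveringMap.exists_lift_sphere {E X : Type*} [TopologicalSpace E] [TopologicalSpace X]
    {p : E → X} (hp : IsCoveringMap p) {n : ℕ} [Fact (finrank ℝ W = n + 1)] (hn : 2 ≤ n)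
    (α : C(sphere (0 : W) 1, X)) (b : sphere (0 : W) 1) {e₀ : E} (he₀ : p e₀ = α b) :
    ∃ F : C(sphere (0 : W) 1, E), F b = e₀ ∧ p ∘ F = α := by
  have := locallyPathConnectedSpace_sphere (W := W) n
  have := contractibleSpace_sphere_compl_singleton n (-b)
  have := contractibleSpace_sphere_compl_singleton n b
  have hb : b ≠ -b := ne_neg_of_mem_unit_sphere ℝ b
  refine hp.exists_lift_of_isOpen_cover α (U := {-b}ᶜ) (V := {b}ᶜ) isOpen_compl_singleton
    isOpen_compl_singleton ?_ (isPathConnected_sphere_compl_pair hn hb).isConnected hb he₀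
  rw [← compl_inter, singleton_inter_eq_empty.mpr (mem_singleton_iff.not.mpr hb.symm),
    compl_empty]

end Sphere

theorem stmt_12_general {X Y XT YT : Type*} [TopologicalSpace X] [TopologicalSpace Y]
    [TopologicalSpace XT] [TopologicalSpace YT]
    (p : XT → X) (q : YT → Y) (hp : IsCoveringMap p) (hq : IsCoveringMap q)
    (f : X → Y)
    (x₀ : X) (xt₀ : XT) (hxt₀ : p xt₀ = x₀)
    (f0 : XT → YT) (hf0 : IsLift p q f f0)
    (h : YT ≃ₜ YT) (hh : IsDeck q h)
    (HT : C(XT × I, YT))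
    (hHT0 : ∀ x, HT (x, 0) = f0 x) (hHT1 : ∀ x, HT (x, 1) = h (f0 x))
    (m : ℕ) (hm : 2 ≤ m)
    (b : Metric.sphere (0 : EuclideanSpace ℝ (Fin (m + 1))) 1)
    (α : C(Metric.sphere (0 : EuclideanSpace ℝ (Fin (m + 1))) 1, X))
    (hα : α b = x₀) :
    ∃ F : C(Metric.sphere (0 : EuclideanSpace ℝ (Fin (m + 1))) 1 × I, Y),
      (∀ s, F (s, 0) = f (α s)) ∧ (∀ s, F (s, 1) = f (α s)) ∧
      (∀ t : I, F (b, t) = q (HT (xt₀, t))) := by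
  have : Fact (finrank ℝ (EuclideanSpace ℝ (Fin (m + 1))) = m + 1) := ⟨finrank_euclideanSpace_fin⟩
  obtain ⟨αt, hαt_b, hαt⟩ := hp.exists_lift_sphere hm α b (hxt₀.trans hα.symm)
  have hq_cont := hq.continuous
  refine ⟨⟨fun st => q (HT (αt st.1, st.2)), by fun_prop⟩, fun s => ?_, fun s => ?_, fun t => ?_⟩
  · simp only [ContinuousMap.coe_mk, hHT0, hf0.2, ← hαt, Function.comp_apply]
  · simp only [ContinuousMap.coe_mk, hHT1, hh _, hf0.2, ← hαt, Function.comp_apply]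
  · simp only [ContinuousMap.coe_mk, hαt_b]

/-- If `HT` is a homotopy from `f0` to `h ∘ f0` and `φ(t) = q (HT (x̃₀, t))` is the
corresponding loop at `f x₀`, then for every `m ≥ 2` and every pointed map
`α : S^m → X`, the Whitehead-product obstruction vanishes: there is
`F : S^m × I → Y` with `F(s,0) = F(s,1) = f (α s)` and `F(b,t) = φ(t)`. -/
theorem stmt_12 {X Y XT YT : Type*} [TopologicalSpace X] [TopologicalSpace Y]
    [TopologicalSpace XT] [TopologicalSpace YT]
    [PathConnectedSpace X] [PathConnectedSpace Y]
    [LocallyPathConnectedSpace X] [LocallyPathConnectedSpace Y]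
    [SimplyConnectedSpace XT] [SimplyConnectedSpace YT]
    [LocallyPathConnectedSpace XT] [LocallyPathConnectedSpace YT]
    (p : XT → X) (q : YT → Y) (hp : IsCoveringMap p) (hq : IsCoveringMap q)
    (f : X → Y) (hf : Continuous f)
    (x₀ : X) (xt₀ : XT) (hxt₀ : p xt₀ = x₀)
    (f0 : XT → YT) (hf0 : IsLift p q f f0)
    (h : YT ≃ₜ YT) (hh : IsDeck q h)
    (HT : C(XT × I, YT))
    (hHT0 : ∀ x, HT (x, 0) = f0 x) (hHT1 : ∀ x, HT (x, 1) = h (f0 x))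
    (m : ℕ) (hm : 2 ≤ m)
    (b : Metric.sphere (0 : EuclideanSpace ℝ (Fin (m + 1))) 1)
    (α : C(Metric.sphere (0 : EuclideanSpace ℝ (Fin (m + 1))) 1, X))
    (hα : α b = x₀) :
    ∃ F : C(Metric.sphere (0 : EuclideanSpace ℝ (Fin (m + 1))) 1 × I, Y),
      (∀ s, F (s, 0) = f (α s)) ∧ (∀ s, F (s, 1) = f (α s)) ∧
      (∀ t : I, F (b, t) = q (HT (xt₀, t))) :=
  stmt_12_general p q hp hq f x₀ xt₀ hxt₀ f0 hf0 h hh HT hHT0 hHT1 m hm b α hα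
end
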